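/- Let 𝐏 ⊆ 𝐏⁺ be a collection of lacunary tiles, let a : 𝐏 → [0,∞), let A > 0 and 0 < η < 1. Suppose that for every tree T that is complete with respect to 𝐏 there exists a collection 𝐓 of trees contained in T whose tops {P_{T′} : T′ ∈ 𝐓} form a (1−η)-packing of T, such that ‖a‖_{size(T \ ⋃_{T′∈𝐓} T′)} ≤ A. Then ‖a‖_{size*(𝐏)} ≤ A/η. -/

import Mathlib

open MeasureTheory Set

noncomputable section

namespace Dyadic

/-- A dyadic interval/lacunary tile: `I = [j·2^k, (j+1)·2^k)` with `-M ≤ k ≤ M`,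
`I ⊆ [0, 2^M)`.  Lacunary tiles are in bijection with dyadic intervals, so we
identify the tile `P⁺(I) = I × [1/|I|, 2/|I|)` with the data of `I`. -/
structure Tile (M : ℕ) where
  j : ℤ
  k : ℤ
  hk_lb : -(M : ℤ) ≤ k
  hk_ub : k ≤ (M : ℤ)
  hj : 0 ≤ j
  hsub : ((j : ℝ) + 1) * 2 ^ k ≤ 2 ^ (M : ℤ)

variable {M : ℕ}

/-- The side length `|I_P| = 2^k` of the spatial interval of the tile. -/
def Tile.len (P : Tile M) : ℝ := 2 ^ P.k

/-- The spatial interval `I_P` of the tile. -/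
def Tile.ival (P : Tile M) : Set ℝ :=
  Ico ((P.j : ℝ) * 2 ^ P.k) (((P.j : ℝ) + 1) * 2 ^ P.k)

/-- The order `P ≤′ Q` on lacunary tiles: `I_P ⊆ I_Q`. -/
def Tile.le (P Q : Tile M) : Prop := P.ival ⊆ Q.ival

/-- A (lacunary) tree: a collection of tiles together with a top tile. -/
structure Tree (M : ℕ) where
  tiles : Set (Tile M)
  top : Tile M
  top_mem : top ∈ tiles
  le_top : ∀ P ∈ tiles, P.le top

/-- `|I_T|`, the length of the spatial interval of the top of the tree. -/
def Tree.len (T : Tree M) : ℝ := T.top.len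

/-- A collection of tiles is convex if `P₁ ≤′ P ≤′ P₂` with `P₁, P₂` in the
collection implies `P` is in the collection. -/
def IsConvex (PP : Set (Tile M)) : Prop :=
  ∀ P₁ ∈ PP, ∀ P₂ ∈ PP, ∀ P : Tile M, P₁.le P → P.le P₂ → P ∈ PP

/-- The size `‖a‖_{size(T)} = (1/|I_T|) Σ_{P ∈ T} a(P)` of `a` on a tree `T`. -/
def treeSize (a : Tile M → ℝ) (T : Tree M) : ℝ :=
  (∑ᶠ P ∈ T.tiles, a P) / T.len

/-- The maximal size `‖a‖_{size*(PP)}`: the supremum of `‖a‖_{size(T)}` over all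
convex trees `T ⊆ PP` (by convention `0` if there are none). -/
def maxSize (a : Tile M → ℝ) (PP : Set (Tile M)) : ℝ :=
  sSup (insert 0 {s : ℝ | ∃ T : Tree M, T.tiles ⊆ PP ∧ IsConvex T.tiles ∧ s = treeSize a T})

/-- The complete tree `Tree(P) = {Q : Q ≤′ P}`. -/
def cTree (P : Tile M) : Set (Tile M) := {Q : Tile M | Q.le P}

/-- A tree `T` is complete with respect to `PP` if `T = Tree(P_T) ∩ PP`. -/
def Tree.IsCompleteIn (T : Tree M) (PP : Set (Tile M)) : Prop :=
  T.tiles = cTree T.top ∩ PP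

/-- `QQ` is an `α`-packing of the tree `T`: `QQ ⊆ T` and `Σ_{P ∈ QQ} |I_P| ≤ α|I_T|`. -/
def IsPacking (α : ℝ) (QQ : Set (Tile M)) (T : Tree M) : Prop :=
  QQ ⊆ T.tiles ∧ (∑ᶠ P ∈ QQ, Tile.len P) ≤ α * T.len

/-- `QQ` is a uniform `α`-packing of the tree `T`:
`Σ_{P ∈ QQ, I_P ⊆ J} |I_P| ≤ α|J|` for every dyadic interval `J`. -/
def IsUniformPacking (α : ℝ) (QQ : Set (Tile M)) (T : Tree M) : Prop :=
  QQ ⊆ T.tiles ∧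
    ∀ J : Tile M, (∑ᶠ P ∈ {P ∈ QQ | P.ival ⊆ J.ival}, Tile.len P) ≤ α * J.len

/-- Left half of the spatial interval. -/
def Tile.left (P : Tile M) : Set ℝ :=
  Ico ((P.j : ℝ) * 2 ^ P.k) (((P.j : ℝ) + 1 / 2) * 2 ^ P.k)

/-- Right half of the spatial interval. -/
def Tile.right (P : Tile M) : Set ℝ :=
  Ico (((P.j : ℝ) + 1 / 2) * 2 ^ P.k) (((P.j : ℝ) + 1) * 2 ^ P.k)

/-- The (mother) Haar wavelet `φ_P = |I_P|^{-1/2}(χ_{I_l} - χ_{I_r})`. -/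
def Tile.haar (P : Tile M) : ℝ → ℝ := fun x =>
  (Real.sqrt P.len)⁻¹ * (P.left.indicator 1 x - P.right.indicator 1 x)

/-- The Haar (wavelet) coefficient `Wf(P) = ⟨f, φ_P⟩`. -/
def waveCoeff (f : ℝ → ℝ) (P : Tile M) : ℝ := ∫ x, f x * P.haar x

/-- The average `[f]_{I_P} = (1/|I_P|)∫_{I_P} f`. -/
def tileAvg (f : ℝ → ℝ) (P : Tile M) : ℝ := (∫ x in P.ival, f x) / P.len

/-- The mean `‖f‖_{mean(P)} = (1/|I_P|)∫_{I_P} |f|`. -/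
def tileMean (f : ℝ → ℝ) (P : Tile M) : ℝ := (∫ x in P.ival, |f x|) / P.len

/-- The maximal mean `‖f‖_{mean*(PP)} = sup_{P ∈ PP} ‖f‖_{mean(P)}`. -/
def maxMean (f : ℝ → ℝ) (PP : Set (Tile M)) : ℝ :=
  sSup (insert 0 (tileMean f '' PP))

/-- The dyadic BMO norm `‖f‖_{BMO} = ‖|Wf|²‖_{size*(PP⁺)}^{1/2}`. -/
def bmoNorm (M : ℕ) (f : ℝ → ℝ) : ℝ :=
  Real.sqrt (maxSize (fun P : Tile M => waveCoeff f P ^ 2) univ)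

/-- The grid interval `[j·2^{-M}, (j+1)·2^{-M})` at the finest scale. -/
def gridIval (M : ℕ) (j : ℤ) : Set ℝ :=
  Ico ((j : ℝ) * 2 ^ (-(M : ℤ))) (((j : ℝ) + 1) * 2 ^ (-(M : ℤ)))

/-- A dyadic test function: supported on `[0, 2^M)` and constant on every dyadic
interval of length `2^{-M}`. -/
def IsTestFun (M : ℕ) (f : ℝ → ℝ) : Prop :=
  (∀ x : ℝ, x ∉ Ico (0 : ℝ) (2 ^ (M : ℤ)) → f x = 0) ∧
    ∀ j : ℤ, ∀ x ∈ gridIval M j, ∀ y ∈ gridIval M j, f x = f y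

/-- The `L²` norm. -/
def l2Norm (f : ℝ → ℝ) : ℝ := Real.sqrt (∫ x, f x ^ 2)

/-- The `L^∞` norm (as a supremum of values; adequate for test functions). -/
def supNorm (f : ℝ → ℝ) : ℝ := ⨆ x : ℝ, |f x|

/-- The weak `L^r` quasinorm `sup_{λ>0} λ |{|h| ≥ λ}|^{1/r}`. -/
def weakNorm (r : ℝ) (h : ℝ → ℝ) : ℝ :=
  sSup {s : ℝ | ∃ l : ℝ, 0 < l ∧ s = l * (volume {x : ℝ | l ≤ |h x|}).toReal ^ (1 / r)}

/-- The phase space projection `Π_T f = Σ_{P ∈ T} ⟨f, φ_P⟩ φ_P` onto a tree. -/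
def treeProj (T : Tree M) (f : ℝ → ℝ) : ℝ → ℝ := fun x =>
  ∑ᶠ P ∈ T.tiles, waveCoeff f P * P.haar x

/-- The high-low paraproduct `π_hl(f,g) = Σ_P Wf(P) [g]_P φ_P`. -/
def paraHL (M : ℕ) (f g : ℝ → ℝ) : ℝ → ℝ := fun x =>
  ∑ᶠ P : Tile M, waveCoeff f P * tileAvg g P * P.haar x

/-- The low-high paraproduct `π_lh(f,g) = Σ_P [f]_P Wg(P) φ_P`. -/
def paraLH (M : ℕ) (f g : ℝ → ℝ) : ℝ → ℝ := fun x =>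
  ∑ᶠ P : Tile M, tileAvg f P * waveCoeff g P * P.haar x

/-- The high-high paraproduct `π_hh(f,g) = Σ_P Wf(P) Wg(P) χ_{I_P}/|I_P|`. -/
def paraHH (M : ℕ) (f g : ℝ → ℝ) : ℝ → ℝ := fun x =>
  ∑ᶠ P : Tile M, waveCoeff f P * waveCoeff g P * P.ival.indicator 1 x / P.len

/-- The constant function `1` on `[0, 2^M)`. -/
def oneFn (M : ℕ) : ℝ → ℝ := (Ico (0 : ℝ) (2 ^ (M : ℤ))).indicator 1

/-- A perfect dyadic Calderón–Zygmund operator, recorded via its kernel `K` and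
kernel constant `A₀`. -/
structure PDCZ (M : ℕ) where
  K : ℝ → ℝ → ℝ
  A₀ : ℝ
  hA₀ : 0 < A₀
  meas : Measurable (Function.uncurry K)
  bound : ∀ x y : ℝ, x ≠ y → |K x y| ≤ A₀ / |x - y|
  perfectX : ∀ I J : Tile M, Disjoint I.ival J.ival →
    ∀ x ∈ I.ival, ∀ x' ∈ I.ival, ∀ y ∈ J.ival, K x y = K x' y
  perfectY : ∀ I J : Tile M, Disjoint I.ival J.ival →
    ∀ x ∈ I.ival, ∀ x' ∈ I.ival, ∀ y ∈ J.ival, K y x = K y x'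
  diag : ∀ I : Tile M, I.k = -(M : ℤ) → ∀ x ∈ I.ival, ∀ y ∈ I.ival, K x y = 0
  corner₁ : ∀ x ∈ Ico (0 : ℝ) (2 ^ ((M : ℤ) - 1)),
    ∀ y ∈ Ico ((2 : ℝ) ^ ((M : ℤ) - 1)) (2 ^ (M : ℤ)), K x y = 0
  corner₂ : ∀ x ∈ Ico ((2 : ℝ) ^ ((M : ℤ) - 1)) (2 ^ (M : ℤ)),
    ∀ y ∈ Ico (0 : ℝ) (2 ^ ((M : ℤ) - 1)), K x y = 0

/-- `Tf(x) = ∫ K(x,y) f(y) dy`. -/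
def PDCZ.app (Op : PDCZ M) (f : ℝ → ℝ) : ℝ → ℝ := fun x => ∫ y, Op.K x y * f y

/-- The transpose `T*f(x) = ∫ K(y,x) f(y) dy`. -/
def PDCZ.appT (Op : PDCZ M) (f : ℝ → ℝ) : ℝ → ℝ := fun x => ∫ y, Op.K y x * f y

/-- Complex-valued Haar coefficient. -/
def waveCoeffC (b : ℝ → ℂ) (P : Tile M) : ℂ := ∫ x, b x * (P.haar x : ℂ)

/-- Complex-valued average. -/
def tileAvgC (b : ℝ → ℂ) (P : Tile M) : ℂ := (∫ x in P.ival, b x) / (P.len : ℂ)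

/-- BMO norm of a complex-valued function. -/
def bmoNormC (M : ℕ) (b : ℝ → ℂ) : ℝ :=
  Real.sqrt (maxSize (fun P : Tile M => ‖waveCoeffC b P‖ ^ 2) univ)

/-- Complex-valued dyadic test functions. -/
def IsTestFunC (M : ℕ) (b : ℝ → ℂ) : Prop :=
  (∀ x : ℝ, x ∉ Ico (0 : ℝ) (2 ^ (M : ℤ)) → b x = 0) ∧
    ∀ j : ℤ, ∀ x ∈ gridIval M j, ∀ y ∈ gridIval M j, b x = b y

/-- The operator applied to a complex-valued function. -/
def PDCZ.appC (Op : PDCZ M) (b : ℝ → ℂ) : ℝ → ℂ := fun x => ∫ y, (Op.K x y : ℂ) * b y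

/-!
Induct on the length of the top interval. A tree `T ⊆ 𝐏` is contained in the complete tree
with the same top, to which the hypothesis applies: the tiles outside the selected subtrees
contribute at most `A|I_T|`, while every selected subtree `T'` has `|I_{T'}| ≤ (1 - η)|I_T|`,
so by induction contributes at most `(A/η)|I_{T'}|`. Summing over the packing gives
`A|I_T| + (A/η)(1 - η)|I_T| = (A/η)|I_T|`.
-/

end Dyadic

section FinsumMono

variable {α ι β : Type*} [AddCommMonoid β] [PartialOrder β] [IsOrderedAddMonoid β]
  {f : α → β} {s t : Set α}

theorem finsum_mem_le_finsum_mem {g : α → β} (hs : s.Finite) (h : ∀ x ∈ s, f x ≤ g x) :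
    ∑ᶠ x ∈ s, f x ≤ ∑ᶠ x ∈ s, g x := by
  rw [finsum_mem_eq_finite_toFinset_sum _ hs, finsum_mem_eq_finite_toFinset_sum _ hs]
  exact Finset.sum_le_sum fun x hx => h x (hs.mem_toFinset.1 hx)

theorem finsum_mem_le_finsum_mem_of_subset (hst : s ⊆ t) (ht : t.Finite)
    (hf : ∀ x ∈ t \ s, 0 ≤ f x) : ∑ᶠ x ∈ s, f x ≤ ∑ᶠ x ∈ t, f x := by
  rw [← finsum_mem_add_sdiff hst ht]
  exact le_add_of_nonneg_right (finsum_nonneg fun x => finsum_nonneg (hf x))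

theorem single_le_finsum_mem {x : α} (hx : x ∈ s) (hs : s.Finite) (hf : ∀ y ∈ s, 0 ≤ f y) :
    f x ≤ ∑ᶠ y ∈ s, f y := by
  simpa only [finsum_mem_singleton] using finsum_mem_le_finsum_mem_of_subset
    (singleton_subset_iff.mpr hx) hs fun y hy => hf y hy.1

theorem finsum_mem_union_le (hs : s.Finite) (ht : t.Finite) (hf : ∀ x ∈ s ∩ t, 0 ≤ f x) :
    ∑ᶠ x ∈ s ∪ t, f x ≤ ∑ᶠ x ∈ s, f x + ∑ᶠ x ∈ t, f x := by
  rw [← finsum_mem_union_inter hs ht]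
  exact le_add_of_nonneg_right (finsum_nonneg fun x => finsum_nonneg (hf x))

theorem finsum_mem_biUnion_le {I : Set ι} {u : ι → Set α} (hI : I.Finite)
    (hu : ∀ i ∈ I, (u i).Finite) (hf : ∀ i ∈ I, ∀ x ∈ u i, 0 ≤ f x) :
    ∑ᶠ x ∈ ⋃ i ∈ I, u i, f x ≤ ∑ᶠ i ∈ I, ∑ᶠ x ∈ u i, f x := by
  induction I, hI using Set.Finite.induction_on with
  | empty => simp
  | @insert i I hiI hI ih =>
    rw [biUnion_insert, finsum_mem_insert _ hiI hI]
    refine (finsum_mem_union_le (hu i (mem_insert i I))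
      (hI.biUnion fun j hj => hu j (mem_insert_of_mem i hj))
      fun x hx => hf i (mem_insert i I) x hx.1).trans ?_
    gcongr
    exact ih (fun j hj => hu j (mem_insert_of_mem i hj)) fun j hj => hf j (mem_insert_of_mem i hj)

end FinsumMono

namespace Dyadic

variable {M : ℕ}

theorem Tile.j_lt (P : Tile M) : P.j < 4 ^ M := by
  have hj : (0 : ℝ) ≤ P.j + 1 := by have := P.hj; positivity
  have h : ((P.j : ℝ) + 1) * 2 ^ (-(M : ℤ)) ≤ 2 ^ (M : ℤ) :=
    (mul_le_mul_of_nonneg_left (zpow_le_zpow_right₀ one_le_two P.hk_lb) hj).trans P.hsub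
  rw [zpow_neg, ← div_eq_mul_inv, div_le_iff₀ (by positivity), ← zpow_add₀ two_ne_zero] at h
  have : (P.j : ℝ) + 1 ≤ (4 ^ M : ℤ) := h.trans_eq <| by
    rw [← two_mul, zpow_mul, zpow_natCast]; norm_num
  exact_mod_cast this

instance : Finite (Tile M) := by
  have : Finite (Ico (0 : ℤ) (4 ^ M) ×ˢ Icc (-(M : ℤ)) M) :=
    ((finite_Ico _ _).prod (finite_Icc _ _)).to_subtype
  refine Finite.of_injective
    (fun P : Tile M => (⟨(P.j, P.k), ⟨P.hj, P.j_lt⟩, P.hk_lb, P.hk_ub⟩ :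
      Ico (0 : ℤ) (4 ^ M) ×ˢ Icc (-(M : ℤ)) M)) ?_
  rintro ⟨⟩ ⟨⟩ h
  obtain ⟨rfl, rfl⟩ := Prod.mk.inj (congrArg Subtype.val h)
  rfl

instance : Finite (Tree M) :=
  Finite.of_injective (fun T : Tree M => (T.tiles, T.top)) <| by
    rintro ⟨⟩ ⟨⟩ h
    simp_all

theorem Tile.len_pos (P : Tile M) : 0 < P.len := zpow_pos two_pos _

theorem Tree.len_pos (T : Tree M) : 0 < T.len := T.top.len_pos

theorem wellFounded_tree_len : WellFounded (fun T T' : Tree M => T.len < T'.len) :=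
  @Finite.wellFounded_of_trans_of_irrefl _ _ _ ⟨fun _ _ _ => lt_trans⟩ ⟨fun _ => lt_irrefl _⟩

def completeTree (PP : Set (Tile M)) (P : Tile M) (hP : P ∈ PP) : Tree M where
  tiles := cTree P ∩ PP
  top := P
  top_mem := ⟨(subset_rfl : P.ival ⊆ P.ival), hP⟩
  le_top _ hQ := hQ.1

theorem completeTree_isCompleteIn (PP : Set (Tile M)) (P : Tile M) (hP : P ∈ PP) :
    (completeTree PP P hP).IsCompleteIn PP :=
  rfl

theorem Tree.tiles_subset_completeTree {PP : Set (Tile M)} (T : Tree M) (hT : T.tiles ⊆ PP) :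
    T.tiles ⊆ (completeTree PP T.top (hT T.top_mem)).tiles :=
  fun P hP => ⟨T.le_top P hP, hT hP⟩

def AdmitsTreeSampling (PP : Set (Tile M)) (a : Tile M → ℝ) (A η : ℝ) : Prop :=
  ∀ T : Tree M, T.IsCompleteIn PP →
    ∃ TT : Set (Tree M),
      (∀ T' ∈ TT, T'.tiles ⊆ T.tiles) ∧
      (∀ T' ∈ TT, T'.top ∈ T.tiles) ∧
      (∑ᶠ T' ∈ TT, Tile.len T'.top) ≤ (1 - η) * T.len ∧
      (∑ᶠ P ∈ (T.tiles \ ⋃ T' ∈ TT, T'.tiles), a P) ≤ A * T.len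

theorem sum_le_of_admitsTreeSampling {PP : Set (Tile M)} {a : Tile M → ℝ} {A η : ℝ}
    (ha : ∀ P ∈ PP, 0 ≤ a P) (hA : 0 ≤ A) (hη : 0 < η) (h : AdmitsTreeSampling PP a A η)
    (T : Tree M) (hT : T.tiles ⊆ PP) : ∑ᶠ P ∈ T.tiles, a P ≤ A / η * T.len := by
  induction T using wellFounded_tree_len.induction with
  | _ T ih =>
    set Tc := completeTree PP T.top (hT T.top_mem)
    obtain ⟨TT, hsub, -, hpack, hrest⟩ := h Tc (completeTree_isCompleteIn _ _ _)
    change _ ≤ (1 - η) * T.len at hpack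
    change _ ≤ A * T.len at hrest
    have hTcPP : Tc.tiles ⊆ PP := fun _ hP => hP.2
    have hsubtree : ∀ T' ∈ TT, ∑ᶠ P ∈ T'.tiles, a P ≤ A / η * T'.len := fun T' hT' =>
      have hlen : T'.len < T.len :=
        ((single_le_finsum_mem hT' (toFinite _) fun T'' _ => T''.len_pos.le).trans hpack).trans_lt
          (mul_lt_of_lt_one_left T.len_pos (by linarith))
      ih T' hlen ((hsub T' hT').trans hTcPP)
    have hunion : ∑ᶠ P ∈ ⋃ T' ∈ TT, T'.tiles, a P ≤ A / η * ((1 - η) * T.len) := calc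
      _ ≤ ∑ᶠ T' ∈ TT, ∑ᶠ P ∈ T'.tiles, a P := finsum_mem_biUnion_le (toFinite _)
            (fun _ _ => toFinite _) fun T' hT' P hP => ha P (hTcPP (hsub T' hT' hP))
      _ ≤ ∑ᶠ T' ∈ TT, A / η * T'.len := finsum_mem_le_finsum_mem (toFinite _) hsubtree
      _ ≤ A / η * ((1 - η) * T.len) := by
          rw [← mul_finsum_mem]
          exact mul_le_mul_of_nonneg_left hpack (div_nonneg hA hη.le)
    calc ∑ᶠ P ∈ T.tiles, a P ≤ ∑ᶠ P ∈ Tc.tiles, a P :=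
          finsum_mem_le_finsum_mem_of_subset (T.tiles_subset_completeTree hT) (toFinite _)
            fun P hP => ha P (hTcPP hP.1)
      _ = ∑ᶠ P ∈ ⋃ T' ∈ TT, T'.tiles, a P + ∑ᶠ P ∈ Tc.tiles \ ⋃ T' ∈ TT, T'.tiles, a P :=
          (finsum_mem_add_sdiff (iUnion₂_subset hsub) (toFinite _)).symm
      _ ≤ A / η * ((1 - η) * T.len) + A * T.len := add_le_add hunion hrest
      _ = A / η * T.len := by field_simp; ring

theorem maxSize_le {PP : Set (Tile M)} {a : Tile M → ℝ} {C : ℝ} (hC : 0 ≤ C)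
    (h : ∀ T : Tree M, T.tiles ⊆ PP → ∑ᶠ P ∈ T.tiles, a P ≤ C * T.len) : maxSize a PP ≤ C := by
  refine csSup_le (insert_nonempty _ _) ?_
  rintro _ (rfl | ⟨T, hT, -, rfl⟩)
  · exact hC
  · rw [treeSize, div_le_iff₀ T.len_pos]
    exact h T hT

theorem statement1_general (M : ℕ) (PP : Set (Tile M)) (a : Tile M → ℝ) (A η : ℝ)
    (ha : ∀ P ∈ PP, 0 ≤ a P) (hA : 0 < A) (hη0 : 0 < η)
    (h : ∀ T : Tree M, T.IsCompleteIn PP →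
      ∃ TT : Set (Tree M),
        (∀ T' ∈ TT, T'.tiles ⊆ T.tiles) ∧
        (∀ T' ∈ TT, T'.top ∈ T.tiles) ∧
        (∑ᶠ T' ∈ TT, Tile.len T'.top) ≤ (1 - η) * T.len ∧
        (∑ᶠ P ∈ (T.tiles \ ⋃ T' ∈ TT, T'.tiles), a P) ≤ A * T.len) :
    maxSize a PP ≤ A / η :=
  maxSize_le (div_nonneg hA.le hη0.le) (sum_le_of_admitsTreeSampling ha hA.le hη0 h)

/-- Lemma 2.3, "tree-samp". -/
theorem statement1 (M : ℕ) (PP : Set (Tile M)) (a : Tile M → ℝ) (A η : ℝ)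
    (ha : ∀ P ∈ PP, 0 ≤ a P) (hA : 0 < A) (hη0 : 0 < η) (hη1 : η < 1)
    (h : ∀ T : Tree M, T.IsCompleteIn PP →
      ∃ TT : Set (Tree M),
        (∀ T' ∈ TT, T'.tiles ⊆ T.tiles) ∧
        (∀ T' ∈ TT, T'.top ∈ T.tiles) ∧
        (∑ᶠ T' ∈ TT, Tile.len T'.top) ≤ (1 - η) * T.len ∧
        (∑ᶠ P ∈ (T.tiles \ ⋃ T' ∈ TT, T'.tiles), a P) ≤ A * T.len) :
    maxSize a PP ≤ A / η :=
  statement1_general M PP a A η ha hA hη0 h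

end Dyadic
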